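/- (Gessel–Viennot–Lindström) Let G be a DAG on {1,...,m} with edge-weight matrix Λ (λ_{ij} = 0 if i→j is not an edge), and let A, B be subsets of vertices with |A| = |B| = ℓ. Then det(((I−Λ)^{-1})_{A,B}) = Σ_{S ∈ N(A,B)} (−1)^S λ^S, where N(A,B) is the set of systems of ℓ pairwise vertex-disjoint directed paths connecting A bijectively to B, λ^S is the product of the edge weights over all paths, and (−1)^S is the sign of the induced permutation from A to B. In particular, det(((I−Λ)^{-1})_{A,B}) = 0 (identically in the λ's) if and only if every system of ℓ directed paths from A to B has two paths that share a vertex. -/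

import Mathlib

open scoped Matrix

/-- A finite set `S` of vertices is (the vertex set of) a directed path from `a` to `b`
    in a DAG whose edges go strictly upward (so a path is determined by its vertex
    set). -/
def IsPathSet {n : ℕ} (E : Fin n → Fin n → Prop) (S : Finset (Fin n))
    (a b : Fin n) : Prop :=
  (S.sort (· ≤ ·)).Chain' E ∧ (S.sort (· ≤ ·)).head? = some a ∧
    (S.sort (· ≤ ·)).getLast? = some b

instance {n : ℕ} (E : Fin n → Fin n → Prop) [DecidableRel E]
    (S : Finset (Fin n)) (a b : Fin n) : Decidable (IsPathSet E S a b) := by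
  unfold IsPathSet List.Chain'; infer_instance

/-- The path monomial λ^P. -/
def pathWeight {n : ℕ} (Λ : Matrix (Fin n) (Fin n) ℝ) (S : Finset (Fin n)) : ℝ :=
  (((S.sort (· ≤ ·)).zip (S.sort (· ≤ ·)).tail).map fun e => Λ e.1 e.2).prod


/-!
Since edges go upward, a path is determined by its vertex set, and splitting off the first edge
shows that the matrix `P` of path generating functions satisfies `P = 1 + Λ P`, i.e.
`P = (1 - Λ)⁻¹`. Expanding `det P_{A,B}` gives a signed sum over all systems of paths from `A` to
`B`. On the systems in which two paths meet, swapping the tails of two paths at their least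
common vertex is a weight-preserving, sign-reversing involution, so only vertex-disjoint systems
survive. Conversely, given a disjoint system, weight its own edges by `1` and all other edges by
`0`: every system that still contributes stays inside those paths, hence has the same
permutation, and the determinant is `±` a positive number.
-/

open Finset

namespace GesselViennotLindstrom

section ListWeight

variable {α M : Type*} [CommMonoid M] (w : α → α → M)

def listWeight (l : List α) : M := ((l.zip l.tail).map fun e => w e.1 e.2).prod

@[simp] lemma listWeight_nil : listWeight w [] = 1 := rfl

@[simp] lemma listWeight_singleton (a : α) : listWeight w [a] = 1 := rfl

@[simp] lemma listWeight_cons_cons (a b : α) (l : List α) :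
    listWeight w (a :: b :: l) = w a b * listWeight w (b :: l) := by
  simp [listWeight]

lemma listWeight_append_cons (l₁ : List α) (c : α) (l₂ : List α) :
    listWeight w (l₁ ++ c :: l₂) = listWeight w (l₁ ++ [c]) * listWeight w (c :: l₂) := by
  induction l₁ with
  | nil => simp
  | cons a l ih =>
    cases l with
    | nil => simp
    | cons b l =>
      simp only [List.cons_append, listWeight_cons_cons] at ih ⊢
      rw [ih, mul_assoc]

variable {w}

lemma listWeight_eq_one_of_isChain :
    ∀ {l : List α}, (l.IsChain fun a b => w a b = 1) → listWeight w l = 1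
  | [], _ | [_], _ => by simp
  | a :: b :: l, h => by
    rw [List.isChain_cons_cons] at h
    rw [listWeight_cons_cons, h.1, listWeight_eq_one_of_isChain h.2, one_mul]

lemma isChain_ne_zero_of_listWeight_ne_zero {M : Type*} [CommMonoidWithZero M] {w : α → α → M} :
    ∀ {l : List α}, listWeight w l ≠ 0 → l.IsChain fun a b => w a b ≠ 0
  | [], _ | [_], _ => by simp
  | a :: b :: l, h => by
    rw [listWeight_cons_cons] at h
    exact .cons_cons (left_ne_zero_of_mul h)
      (isChain_ne_zero_of_listWeight_ne_zero (right_ne_zero_of_mul h))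

lemma listWeight_nonneg {R : Type*} [CommMonoidWithZero R] [PartialOrder R] [ZeroLEOneClass R]
    [PosMulMono R] {w : α → α → R} (hw : ∀ a b, 0 ≤ w a b) (l : List α) :
    0 ≤ listWeight w l :=
  List.prod_nonneg fun _ hx => by
    obtain ⟨e, -, rfl⟩ := List.mem_map.1 hx
    exact hw e.1 e.2

end ListWeight

section SortedCut

variable {α : Type*} [LinearOrder α] {S T : Finset α} {v : α}

lemma sort_eq_sort_append_cons_sort {P Q : Finset α} (hP : ∀ x ∈ P, x < v)
    (hQ : ∀ x ∈ Q, v < x) (hS : ∀ x, x ∈ S ↔ x ∈ P ∨ x = v ∨ x ∈ Q) :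
    S.sort (· ≤ ·) = P.sort (· ≤ ·) ++ v :: Q.sort (· ≤ ·) := by
  refine S.sortedLT_sort.eq_of_mem_iff ?_ (by simp [hS])
  rw [List.sortedLT_iff_pairwise, List.pairwise_append, List.pairwise_cons]
  refine ⟨P.sortedLT_sort.pairwise, ⟨by simpa using hQ, Q.sortedLT_sort.pairwise⟩, ?_⟩
  simp only [mem_sort, List.mem_cons]
  rintro x hx y (rfl | hy)
  exacts [hP x hx, (hP x hx).trans (hQ y hy)]

lemma sort_eq_append_cons (hv : v ∈ S) :
    S.sort (· ≤ ·) = (S.filter (· < v)).sort (· ≤ ·) ++ v :: (S.filter (v < ·)).sort (· ≤ ·) :=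
  sort_eq_sort_append_cons_sort (by simp) (by simp) fun x => by simp; grind

lemma sort_filter_le (hv : v ∈ S) :
    (S.filter (· ≤ v)).sort (· ≤ ·) = (S.filter (· < v)).sort (· ≤ ·) ++ [v] := by
  simpa using sort_eq_sort_append_cons_sort (S := S.filter (· ≤ v)) (P := S.filter (· < v))
    (Q := ∅) (v := v) (by simp) (by simp) fun x => by simp; grind

lemma sort_filter_ge (hv : v ∈ S) :
    (S.filter (v ≤ ·)).sort (· ≤ ·) = v :: (S.filter (v < ·)).sort (· ≤ ·) := by
  simpa using sort_eq_sort_append_cons_sort (S := S.filter (v ≤ ·)) (P := ∅)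
    (Q := S.filter (v < ·)) (v := v) (by simp) (by simp) fun x => by simp; grind

lemma sort_eq_min'_cons (hT : T.Nonempty) :
    T.sort (· ≤ ·) = T.min' hT :: (T.erase (T.min' hT)).sort (· ≤ ·) := by
  conv_lhs => rw [← insert_erase (T.min'_mem hT)]
  exact sort_insert _ (fun x hx => T.min'_le x (mem_of_mem_erase hx)) (notMem_erase _ _)

end SortedCut

end GesselViennotLindstrom

namespace IsPathSet

variable {n : ℕ} {E : Fin n → Fin n → Prop} {S : Finset (Fin n)} {a b : Fin n}

lemma exists_sort_eq_cons (h : IsPathSet E S a b) : ∃ t, S.sort (· ≤ ·) = a :: t :=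
  List.head?_eq_some_iff.1 h.2.1

lemma head_sort (h : IsPathSet E S a b) (hne : S.sort (· ≤ ·) ≠ []) :
    (S.sort (· ≤ ·)).head hne = a :=
  Option.some.inj ((List.head?_eq_some_head hne).symm.trans h.2.1)

lemma start_mem (h : IsPathSet E S a b) : a ∈ S := by
  obtain ⟨t, ht⟩ := h.exists_sort_eq_cons
  rw [← mem_sort (· ≤ ·), ht]
  exact List.mem_cons_self

lemma start_le (h : IsPathSet E S a b) {x : Fin n} (hx : x ∈ S) : a ≤ x := by
  obtain ⟨t, ht⟩ := h.exists_sort_eq_cons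
  have hsorted := S.pairwise_sort (· ≤ ·)
  rw [← mem_sort (· ≤ ·), ht, List.mem_cons] at hx
  rw [ht, List.pairwise_cons] at hsorted
  rcases hx with rfl | hx
  exacts [le_rfl, hsorted.1 x hx]

lemma end_mem (h : IsPathSet E S a b) : b ∈ S := by
  rw [← mem_sort (· ≤ ·)]
  exact List.mem_of_getLast? h.2.2

lemma nonempty (h : IsPathSet E S a b) : S.Nonempty := ⟨a, h.start_mem⟩

lemma min'_eq (h : IsPathSet E S a b) (hS : S.Nonempty) : S.min' hS = a :=
  le_antisymm (S.min'_le a h.start_mem) (S.le_min' hS a fun _ => h.start_le)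

end IsPathSet

namespace GesselViennotLindstrom

variable {n : ℕ} {E : Fin n → Fin n → Prop}

section Paths

variable {S T : Finset (Fin n)} {a b i j v : Fin n}

lemma isPathSet_iff : IsPathSet E S a b ↔ (S.sort (· ≤ ·)).IsChain E ∧
    (S.sort (· ≤ ·)).head? = some a ∧ (S.sort (· ≤ ·)).getLast? = some b :=
  Iff.rfl

lemma pathWeight_eq_listWeight (Λ : Matrix (Fin n) (Fin n) ℝ) (S : Finset (Fin n)) :
    pathWeight Λ S = listWeight (Λ · ·) (S.sort (· ≤ ·)) :=
  rfl

lemma isPathSet_iff_filter_le_and_filter_ge (hv : v ∈ S) :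
    IsPathSet E S a b ↔
      IsPathSet E (S.filter (· ≤ v)) a v ∧ IsPathSet E (S.filter (v ≤ ·)) v b := by
  simp only [isPathSet_iff, sort_filter_le hv, sort_filter_ge hv, sort_eq_append_cons hv]
  rw [List.isChain_split]
  simp [List.head?_append, List.getLast?_append]
  tauto

lemma pathWeight_eq_filter_le_mul_filter_ge (Λ : Matrix (Fin n) (Fin n) ℝ) (hv : v ∈ S) :
    pathWeight Λ S = pathWeight Λ (S.filter (· ≤ v)) * pathWeight Λ (S.filter (v ≤ ·)) := by
  rw [pathWeight_eq_listWeight, sort_eq_append_cons hv, listWeight_append_cons,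
    ← sort_filter_le hv, ← sort_filter_ge hv]
  rfl

lemma isPathSet_singleton_iff : IsPathSet E {i} i j ↔ i = j := by
  simp [isPathSet_iff]

lemma pathWeight_singleton (Λ : Matrix (Fin n) (Fin n) ℝ) (i : Fin n) :
    pathWeight Λ {i} = 1 := by
  simp [pathWeight_eq_listWeight]

lemma isPathSet_insert_iff (hi : ∀ x ∈ T, i < x) (hT : T.Nonempty) :
    IsPathSet E (insert i T) i j ↔ E i (T.min' hT) ∧ IsPathSet E T (T.min' hT) j := by
  rw [isPathSet_iff, isPathSet_iff, sort_insert _ (fun x hx => (hi x hx).le)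
    (fun h => (hi i h).false), sort_eq_min'_cons hT]
  simp [and_assoc]

lemma pathWeight_insert (Λ : Matrix (Fin n) (Fin n) ℝ) (hi : ∀ x ∈ T, i < x)
    (hT : T.Nonempty) : pathWeight Λ (insert i T) = Λ i (T.min' hT) * pathWeight Λ T := by
  rw [pathWeight_eq_listWeight, pathWeight_eq_listWeight, sort_insert _ (fun x hx => (hi x hx).le)
    (fun h => (hi i h).false), sort_eq_min'_cons hT, listWeight_cons_cons]

end Paths

/-! ### The path matrix inverts `1 - Λ` -/

section PathMatrix

variable (E) [DecidableRel E] (Λ : Matrix (Fin n) (Fin n) ℝ)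

def pathMatrix : Matrix (Fin n) (Fin n) ℝ :=
  Matrix.of fun i j => ∑ S : Finset (Fin n), if IsPathSet E S i j then pathWeight Λ S else 0

lemma det_submatrix_pathMatrix {ι : Type*} [Fintype ι] [DecidableEq ι] (A B : ι → Fin n) :
    ((pathMatrix E Λ).submatrix A B).det =
      ∑ σ : Equiv.Perm ι, ∑ f : ι → Finset (Fin n),
        if ∀ a, IsPathSet E (f a) (A a) (B (σ a)) then
          ((Equiv.Perm.sign σ : ℤ) : ℝ) * ∏ a, pathWeight Λ (f a)
        else 0 := by
  rw [← Matrix.det_transpose, Matrix.det_apply']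
  refine sum_congr rfl fun σ _ => ?_
  simp only [Matrix.transpose_apply, Matrix.submatrix_apply, pathMatrix, Matrix.of_apply,
    Fintype.prod_sum, Fintype.prod_ite_zero, mul_sum, mul_ite, mul_zero]

variable {E Λ}

lemma sum_mul_pathMatrix (hΛ : ∀ a b, ¬E a b → Λ a b = 0) (i j : Fin n) :
    ∑ v, Λ i v * pathMatrix E Λ v j =
      ∑ p ∈ univ.filter fun p : Fin n × Finset (Fin n) => E i p.1 ∧ IsPathSet E p.2 p.1 j,
        Λ i p.1 * pathWeight Λ p.2 := by
  rw [sum_filter, Fintype.sum_prod_type]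
  refine sum_congr rfl fun v _ => ?_
  rw [pathMatrix, Matrix.of_apply, mul_sum]
  refine sum_congr rfl fun T _ => ?_
  by_cases hv : E i v <;> simp [hv, hΛ]

lemma sum_pathSets_ne_singleton (hE : ∀ a b, E a b → a < b) (hΛ : ∀ a b, ¬E a b → Λ a b = 0)
    (i j : Fin n) :
    ∑ S ∈ univ.erase {i}, (if IsPathSet E S i j then pathWeight Λ S else 0) =
      ∑ v, Λ i v * pathMatrix E Λ v j := by
  have hlt : ∀ {v T}, E i v → IsPathSet E T v j → ∀ x ∈ T, i < x :=
    fun hv hT x hx => (hE _ _ hv).trans_le (hT.start_le hx)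
  rw [sum_mul_pathMatrix hΛ, ← sum_filter]
  symm
  refine sum_nbij (fun p => insert i p.2) ?_ ?_ ?_ ?_
  · rintro ⟨v, T⟩ hp
    obtain ⟨hv, hT⟩ : E i v ∧ IsPathSet E T v j := (mem_filter.1 hp).2
    have hi := hlt hv hT
    refine mem_filter.2 ⟨mem_erase.2 ⟨fun h => ?_, mem_univ _⟩,
      (isPathSet_insert_iff hi hT.nonempty).2 (by rw [hT.min'_eq]; exact ⟨hv, hT⟩)⟩
    have : v ∈ ({i} : Finset (Fin n)) := h ▸ mem_insert_of_mem hT.start_mem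
    exact (hi v hT.start_mem).ne' (mem_singleton.1 this)
  · rintro ⟨v, T⟩ hp ⟨v', T'⟩ hp' h
    obtain ⟨hv, hT⟩ : E i v ∧ IsPathSet E T v j := (mem_filter.1 hp).2
    obtain ⟨hv', hT'⟩ : E i v' ∧ IsPathSet E T' v' j := (mem_filter.1 hp').2
    obtain rfl : T = T' := by
      simpa [erase_insert fun h => (hlt hv hT i h).false,
        erase_insert fun h => (hlt hv' hT' i h).false] using congrArg (·.erase i) h
    exact Prod.ext ((hT.min'_eq hT.nonempty).symm.trans (hT'.min'_eq _)) rfl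
  · intro S hS
    obtain ⟨hS, hpath⟩ := mem_filter.1 hS
    have hi : ∀ x ∈ S.erase i, i < x := fun x hx =>
      (hpath.start_le (mem_of_mem_erase hx)).lt_of_ne (ne_of_mem_erase hx).symm
    have hne : (S.erase i).Nonempty := by
      rw [nonempty_iff_ne_empty, Ne, erase_eq_empty_iff]
      exact not_or.2 ⟨hpath.nonempty.ne_empty, ne_of_mem_erase hS⟩
    have hiS := hpath.start_mem
    rw [← insert_erase hiS, isPathSet_insert_iff hi hne] at hpath
    exact ⟨(_, S.erase i), mem_filter.2 ⟨mem_univ _, hpath⟩, insert_erase hiS⟩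
  · rintro ⟨v, T⟩ hp
    obtain ⟨hv, hT⟩ : E i v ∧ IsPathSet E T v j := (mem_filter.1 hp).2
    rw [pathWeight_insert Λ (hlt hv hT) hT.nonempty, hT.min'_eq]

lemma pathMatrix_eq_one_add_mul (hE : ∀ a b, E a b → a < b)
    (hΛ : ∀ a b, ¬E a b → Λ a b = 0) : pathMatrix E Λ = 1 + Λ * pathMatrix E Λ := by
  ext i j
  rw [Matrix.add_apply, Matrix.mul_apply, ← sum_pathSets_ne_singleton hE hΛ, pathMatrix,
    Matrix.of_apply, ← add_sum_erase _ _ (mem_univ {i}), pathWeight_singleton, Matrix.one_apply]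
  simp only [isPathSet_singleton_iff]

lemma inv_one_sub_eq_pathMatrix (hE : ∀ a b, E a b → a < b)
    (hΛ : ∀ a b, ¬E a b → Λ a b = 0) : (1 - Λ)⁻¹ = pathMatrix E Λ :=
  Matrix.inv_eq_right_inv <| by
    rw [sub_mul, one_mul, sub_eq_iff_eq_add, ← pathMatrix_eq_one_add_mul hE hΛ]

end PathMatrix

/-! ### The tail-swapping involution -/

section Splice

variable {α : Type*} [LinearOrder α] {S T : Finset α} {v x : α}

def splice (S T : Finset α) (v : α) : Finset α := S.filter (· ≤ v) ∪ T.filter (v < ·)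

lemma mem_splice_of_le (hx : x ≤ v) : x ∈ splice S T v ↔ x ∈ S := by
  simp only [splice, mem_union, mem_filter]
  grind

@[simp] lemma splice_self : splice S S v = S := by
  ext x
  simp only [splice, mem_union, mem_filter]
  grind

lemma splice_splice : splice (splice S T v) (splice T S v) v = S := by
  ext x
  simp only [splice, mem_union, mem_filter]
  grind

lemma filter_le_splice : (splice S T v).filter (· ≤ v) = S.filter (· ≤ v) := by
  ext x
  simp only [splice, mem_union, mem_filter]
  grind

lemma filter_ge_splice (hvS : v ∈ S) (hvT : v ∈ T) :
    (splice S T v).filter (v ≤ ·) = T.filter (v ≤ ·) := by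
  ext x
  simp only [splice, mem_union, mem_filter]
  grind

end Splice

section SplicePaths

variable {S T : Finset (Fin n)} {a b a' b' v : Fin n}

lemma isPathSet_splice (hS : IsPathSet E S a b) (hT : IsPathSet E T a' b') (hvS : v ∈ S)
    (hvT : v ∈ T) : IsPathSet E (splice S T v) a b' := by
  rw [isPathSet_iff_filter_le_and_filter_ge ((mem_splice_of_le le_rfl).2 hvS), filter_le_splice,
    filter_ge_splice hvS hvT]
  exact ⟨((isPathSet_iff_filter_le_and_filter_ge hvS).1 hS).1,
    ((isPathSet_iff_filter_le_and_filter_ge hvT).1 hT).2⟩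

lemma pathWeight_splice_mul_splice (Λ : Matrix (Fin n) (Fin n) ℝ) (hvS : v ∈ S) (hvT : v ∈ T) :
    pathWeight Λ (splice S T v) * pathWeight Λ (splice T S v) =
      pathWeight Λ S * pathWeight Λ T := by
  rw [pathWeight_eq_filter_le_mul_filter_ge Λ ((mem_splice_of_le le_rfl).2 hvS),
    pathWeight_eq_filter_le_mul_filter_ge Λ ((mem_splice_of_le le_rfl).2 hvT),
    filter_le_splice, filter_le_splice, filter_ge_splice hvS hvT, filter_ge_splice hvT hvS,
    pathWeight_eq_filter_le_mul_filter_ge Λ hvS, pathWeight_eq_filter_le_mul_filter_ge Λ hvT]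
  ring

end SplicePaths

section TailSwap

variable {ι α : Type*} [DecidableEq ι] [LinearOrder α] {f : ι → Finset α} {a b c : ι} {v x : α}

def tailSwap (f : ι → Finset α) (a b : ι) (v : α) : ι → Finset α :=
  fun c => splice (f c) (f (Equiv.swap a b c)) v

lemma mem_tailSwap_of_le (hx : x ≤ v) : x ∈ tailSwap f a b v c ↔ x ∈ f c :=
  mem_splice_of_le hx

@[simp] lemma tailSwap_tailSwap : tailSwap (tailSwap f a b v) a b v = f :=
  funext fun c => by simp only [tailSwap, Equiv.swap_apply_self, splice_splice]

def flipAt (x : α ×ₗ ι ×ₗ ι) (p : Equiv.Perm ι × (ι → Finset α)) :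
    Equiv.Perm ι × (ι → Finset α) :=
  (p.1 * Equiv.swap x.2.1 x.2.2, tailSwap p.2 x.2.1 x.2.2 x.1)

@[simp] lemma flipAt_flipAt (x : α ×ₗ ι ×ₗ ι) (p : Equiv.Perm ι × (ι → Finset α)) :
    flipAt x (flipAt x p) = p := by
  simp [flipAt, mul_assoc]

end TailSwap

section TailSwapPaths

variable {ι : Type*} [DecidableEq ι] {f : ι → Finset (Fin n)} {A B : ι → Fin n}
  {σ : Equiv.Perm ι} {a b : ι} {v : Fin n}

lemma isPathSet_tailSwap (hp : ∀ c, IsPathSet E (f c) (A c) (B (σ c))) (ha : v ∈ f a)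
    (hb : v ∈ f b) (c : ι) :
    IsPathSet E (tailSwap f a b v c) (A c) (B ((σ * Equiv.swap a b) c)) := by
  rw [Equiv.Perm.mul_apply, tailSwap]
  rcases eq_or_ne c a with rfl | hca
  · rw [Equiv.swap_apply_left]
    exact isPathSet_splice (hp c) (hp b) ha hb
  rcases eq_or_ne c b with rfl | hcb
  · rw [Equiv.swap_apply_right]
    exact isPathSet_splice (hp c) (hp a) hb ha
  rw [Equiv.swap_apply_of_ne_of_ne hca hcb, splice_self]
  exact hp c

lemma prod_pathWeight_tailSwap [Fintype ι] (Λ : Matrix (Fin n) (Fin n) ℝ) (hab : a ≠ b)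
    (ha : v ∈ f a) (hb : v ∈ f b) :
    ∏ c, pathWeight Λ (tailSwap f a b v c) = ∏ c, pathWeight Λ (f c) := by
  rw [← prod_mul_prod_compl {a, b}, ← prod_mul_prod_compl {a, b} (fun c => pathWeight Λ (f c)),
    prod_pair hab, prod_pair hab]
  congr 1
  · simp only [tailSwap, Equiv.swap_apply_left, Equiv.swap_apply_right]
    exact pathWeight_splice_mul_splice Λ ha hb
  · refine prod_congr rfl fun c hc => ?_
    rw [mem_compl, mem_insert, mem_singleton, not_or] at hc
    rw [tailSwap, Equiv.swap_apply_of_ne_of_ne hc.1 hc.2, splice_self]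

end TailSwapPaths

section Crossings

variable {ι α : Type*} [LinearOrder ι] [Fintype ι] [LinearOrder α] [Fintype α]
  {f : ι → Finset α} {x : α ×ₗ ι ×ₗ ι}

def crossings (f : ι → Finset α) : Finset (α ×ₗ ι ×ₗ ι) :=
  univ.filter fun x => x.2.1 ≠ x.2.2 ∧ x.1 ∈ f x.2.1 ∧ x.1 ∈ f x.2.2

lemma mem_crossings : x ∈ crossings f ↔ x.2.1 ≠ x.2.2 ∧ x.1 ∈ f x.2.1 ∧ x.1 ∈ f x.2.2 := by
  simp [crossings]

lemma crossings_nonempty_iff :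
    (crossings f).Nonempty ↔ ¬∀ a b, a ≠ b → Disjoint (f a) (f b) := by
  constructor
  · rintro ⟨x, hx⟩ hdisj
    obtain ⟨hne, ha, hb⟩ := mem_crossings.1 hx
    exact disjoint_left.1 (hdisj _ _ hne) ha hb
  · intro h
    push Not at h
    obtain ⟨a, b, hab, hd⟩ := h
    obtain ⟨v, ha, hb⟩ := not_disjoint_iff.1 hd
    exact ⟨toLex (v, toLex (a, b)), mem_crossings.2 ⟨hab, ha, hb⟩⟩

lemma mem_crossings_tailSwap_iff {a b : ι} {v : α} {y : α ×ₗ ι ×ₗ ι} (hy : y.1 ≤ v) :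
    y ∈ crossings (tailSwap f a b v) ↔ y ∈ crossings f := by
  simp only [mem_crossings, mem_tailSwap_of_le hy]

/- The vertex comes first in the lexicographic order, so the least crossing only sees the paths
up to its vertex, which the tail swap leaves unchanged. -/
lemma isLeast_crossings_tailSwap (hx : IsLeast (crossings f : Set (α ×ₗ ι ×ₗ ι)) x) :
    IsLeast (crossings (tailSwap f x.2.1 x.2.2 x.1) : Set (α ×ₗ ι ×ₗ ι)) x := by
  refine ⟨(mem_crossings_tailSwap_iff le_rfl).2 hx.1, fun y hy => le_of_not_gt fun hyx => ?_⟩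
  have hyx' : y.1 ≤ x.1 := Prod.Lex.monotone_fst _ _ hyx.le
  exact hyx.not_ge (hx.2 ((mem_crossings_tailSwap_iff hyx').1 hy))

def flipFirstCrossing (p : Equiv.Perm ι × (ι → Finset α)) : Equiv.Perm ι × (ι → Finset α) :=
  if h : (crossings p.2).Nonempty then flipAt ((crossings p.2).min' h) p else p

lemma flipFirstCrossing_eq_flipAt {p : Equiv.Perm ι × (ι → Finset α)}
    (hx : IsLeast (crossings p.2 : Set (α ×ₗ ι ×ₗ ι)) x) : flipFirstCrossing p = flipAt x p := by
  have h : (crossings p.2).Nonempty := ⟨x, hx.1⟩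
  rw [flipFirstCrossing, dif_pos h, (isLeast_min' _ h).unique hx]

lemma flipFirstCrossing_involutive :
    Function.Involutive (flipFirstCrossing (ι := ι) (α := α)) := by
  intro p
  by_cases h : (crossings p.2).Nonempty
  · have hx := isLeast_min' _ h
    have hx' : IsLeast (crossings (flipAt _ p).2 : Set (α ×ₗ ι ×ₗ ι)) _ :=
      isLeast_crossings_tailSwap hx
    rw [flipFirstCrossing_eq_flipAt hx, flipFirstCrossing_eq_flipAt hx', flipAt_flipAt]
  · have hp : flipFirstCrossing p = p := dif_neg h
    rw [hp, hp]

end Crossings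

section Cancellation

variable {ι : Type*}

variable (E) in
def IsCrossingSystem (A B : ι → Fin n) (p : Equiv.Perm ι × (ι → Finset (Fin n))) : Prop :=
  (∀ a, IsPathSet E (p.2 a) (A a) (B (p.1 a))) ∧ ¬∀ a b, a ≠ b → Disjoint (p.2 a) (p.2 b)

instance [Fintype ι] [DecidableEq ι] [DecidableRel E] (A B : ι → Fin n) :
    DecidablePred (IsCrossingSystem E A B) :=
  fun _ => inferInstanceAs (Decidable (_ ∧ _))

def signedWeight [Fintype ι] [DecidableEq ι] (Λ : Matrix (Fin n) (Fin n) ℝ)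
    (p : Equiv.Perm ι × (ι → Finset (Fin n))) : ℝ :=
  ((Equiv.Perm.sign p.1 : ℤ) : ℝ) * ∏ a, pathWeight Λ (p.2 a)

variable [LinearOrder ι] [Fintype ι] {A B : ι → Fin n} {p : Equiv.Perm ι × (ι → Finset (Fin n))}

lemma IsCrossingSystem.flipFirstCrossing (h : IsCrossingSystem E A B p) :
    IsCrossingSystem E A B (flipFirstCrossing p) := by
  have hx := isLeast_min' _ (crossings_nonempty_iff.2 h.2)
  obtain ⟨-, ha, hb⟩ := mem_crossings.1 hx.1
  rw [flipFirstCrossing_eq_flipAt hx]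
  exact ⟨isPathSet_tailSwap h.1 ha hb,
    crossings_nonempty_iff.1 ⟨_, (isLeast_crossings_tailSwap hx).1⟩⟩

lemma signedWeight_flipFirstCrossing (Λ : Matrix (Fin n) (Fin n) ℝ)
    (h : (crossings p.2).Nonempty) :
    signedWeight Λ (flipFirstCrossing p) = -signedWeight Λ p := by
  have hx := isLeast_min' _ h
  obtain ⟨hne, ha, hb⟩ := mem_crossings.1 hx.1
  rw [flipFirstCrossing_eq_flipAt hx, signedWeight, signedWeight, flipAt,
    prod_pathWeight_tailSwap Λ hne ha hb, Equiv.Perm.sign_mul, Equiv.Perm.sign_swap hne]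
  push_cast
  ring

variable [DecidableRel E]

lemma sum_signedWeight_crossingSystems (Λ : Matrix (Fin n) (Fin n) ℝ) :
    ∑ p, (if IsCrossingSystem E A B p then signedWeight Λ p else 0) = 0 := by
  refine sum_ninvolution flipFirstCrossing (fun p => ?_) (fun p hp hfix => ?_)
    (fun _ => mem_univ _) flipFirstCrossing_involutive
  · by_cases h : IsCrossingSystem E A B p
    · rw [if_pos h, if_pos h.flipFirstCrossing,
        signedWeight_flipFirstCrossing Λ (crossings_nonempty_iff.2 h.2), add_neg_cancel]
    · have h' : ¬IsCrossingSystem E A B (flipFirstCrossing p) := fun h' =>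
        h (flipFirstCrossing_involutive p ▸ h'.flipFirstCrossing)
      rw [if_neg h, if_neg h', add_zero]
  · have h : IsCrossingSystem E A B p := by
      by_contra h
      exact hp (if_neg h)
    rw [if_pos h] at hp
    have hneg := signedWeight_flipFirstCrossing Λ (crossings_nonempty_iff.2 h.2)
    rw [hfix] at hneg
    exact hp (by linarith)

theorem det_submatrix_inv_one_sub_eq_sum (Λ : Matrix (Fin n) (Fin n) ℝ)
    (hE : ∀ a b, E a b → a < b) (hΛ : ∀ a b, ¬E a b → Λ a b = 0) :
    (((1 - Λ)⁻¹).submatrix A B).det =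
      ∑ σ : Equiv.Perm ι, ∑ f : ι → Finset (Fin n),
        if (∀ a, IsPathSet E (f a) (A a) (B (σ a))) ∧ ∀ a b, a ≠ b → Disjoint (f a) (f b) then
          ((Equiv.Perm.sign σ : ℤ) : ℝ) * ∏ a, pathWeight Λ (f a)
        else 0 := by
  rw [inv_one_sub_eq_pathMatrix hE hΛ, det_submatrix_pathMatrix, ← sub_eq_zero]
  conv_rhs => rw [← sum_signedWeight_crossingSystems (E := E) (A := A) (B := B) Λ,
    Fintype.sum_prod_type]
  rw [← sum_sub_distrib]
  refine sum_congr rfl fun σ _ => ?_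
  rw [← sum_sub_distrib]
  refine sum_congr rfl fun f _ => ?_
  unfold IsCrossingSystem signedWeight
  split_ifs <;> simp_all

end Cancellation

/-! ### A disjoint path system gives a nonzero determinant -/

section BlockIndicator

variable {ι : Type*} [Fintype ι] (E) [DecidableRel E]

def blockIndicator (f₀ : ι → Finset (Fin n)) : Matrix (Fin n) (Fin n) ℝ :=
  Matrix.of fun x y => if E x y ∧ ∃ c, x ∈ f₀ c ∧ y ∈ f₀ c then 1 else 0

variable {E} {f₀ : ι → Finset (Fin n)}

lemma blockIndicator_eq_zero {x y : Fin n} (h : ¬E x y) : blockIndicator E f₀ x y = 0 := by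
  simp [blockIndicator, h]

lemma pathWeight_blockIndicator_nonneg (S : Finset (Fin n)) :
    0 ≤ pathWeight (blockIndicator E f₀) S :=
  listWeight_nonneg (fun x y => by
    simp only [blockIndicator, Matrix.of_apply]
    split_ifs <;> norm_num) _

lemma pathWeight_blockIndicator_self {c : ι} {a b : Fin n} (h : IsPathSet E (f₀ c) a b) :
    pathWeight (blockIndicator E f₀) (f₀ c) = 1 :=
  listWeight_eq_one_of_isChain <| (isPathSet_iff.1 h).1.imp_of_mem_imp fun x y hx hy hxy => by
    rw [mem_sort] at hx hy
    simp only [blockIndicator, Matrix.of_apply]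
    rw [if_pos ⟨hxy, c, hx, hy⟩]

lemma subset_of_pathWeight_blockIndicator_ne_zero
    (hdisj : ∀ a b, a ≠ b → Disjoint (f₀ a) (f₀ b)) {S : Finset (Fin n)} {a b : Fin n} {c : ι}
    (h : IsPathSet E S a b) (ha : a ∈ f₀ c) (hw : pathWeight (blockIndicator E f₀) S ≠ 0) :
    S ⊆ f₀ c := by
  intro x hx
  refine (isChain_ne_zero_of_listWeight_ne_zero hw).induction (· ∈ f₀ c) _
    (fun y z hyz hy => ?_) (fun hne => ?_) x ((mem_sort _).2 hx)
  · obtain ⟨-, c', hyc', hzc'⟩ : E y z ∧ ∃ c', y ∈ f₀ c' ∧ z ∈ f₀ c' := by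
      by_contra h'
      exact hyz (by simp only [blockIndicator, Matrix.of_apply, if_neg h'])
    obtain rfl : c' = c := by
      by_contra hne
      exact disjoint_left.1 (hdisj _ _ hne) hyc' hy
    exact hzc'
  · rwa [h.head_sort hne]

variable {A B : ι → Fin n} {σ₀ : Equiv.Perm ι}

lemma eq_of_prod_pathWeight_blockIndicator_ne_zero
    (hpaths₀ : ∀ c, IsPathSet E (f₀ c) (A c) (B (σ₀ c)))
    (hdisj₀ : ∀ a b, a ≠ b → Disjoint (f₀ a) (f₀ b)) {σ : Equiv.Perm ι} {f : ι → Finset (Fin n)}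
    (hpaths : ∀ c, IsPathSet E (f c) (A c) (B (σ c)))
    (hw : ∏ c, pathWeight (blockIndicator E f₀) (f c) ≠ 0) : σ = σ₀ := by
  ext1 a
  have hsub := subset_of_pathWeight_blockIndicator_ne_zero hdisj₀ (hpaths a)
    (hpaths₀ a).start_mem (prod_ne_zero_iff.1 hw a (mem_univ a))
  have hend : B (σ₀ (σ₀.symm (σ a))) ∈ f₀ (σ₀.symm (σ a)) := (hpaths₀ _).end_mem
  rw [Equiv.apply_symm_apply] at hend
  obtain hc : σ₀.symm (σ a) = a := by
    by_contra hne
    exact disjoint_left.1 (hdisj₀ _ _ hne) hend (hsub (hpaths a).end_mem)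
  exact σ₀.symm_apply_eq.1 hc

theorem det_submatrix_inv_one_sub_blockIndicator_ne_zero [LinearOrder ι]
    (hE : ∀ a b, E a b → a < b) (hpaths₀ : ∀ c, IsPathSet E (f₀ c) (A c) (B (σ₀ c)))
    (hdisj₀ : ∀ a b, a ≠ b → Disjoint (f₀ a) (f₀ b)) :
    (((1 - blockIndicator E f₀)⁻¹).submatrix A B).det ≠ 0 := by
  rw [det_submatrix_inv_one_sub_eq_sum _ hE fun _ _ => blockIndicator_eq_zero,
    sum_eq_single σ₀ ?_ fun h => absurd (mem_univ _) h]
  · simp only [← mul_ite_zero, ← mul_sum]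
    refine mul_ne_zero (by simp) (ne_of_gt ?_)
    refine lt_of_lt_of_le ?_ (single_le_sum (fun f _ => ?_) (mem_univ f₀))
    · rw [if_pos ⟨hpaths₀, hdisj₀⟩,
        prod_eq_one fun c _ => pathWeight_blockIndicator_self (hpaths₀ c)]
      exact one_pos
    · split_ifs
      exacts [prod_nonneg fun c _ => pathWeight_blockIndicator_nonneg _, le_rfl]
  · intro σ _ hσ
    refine sum_eq_zero fun f _ => ite_eq_right_iff.2 fun h => mul_eq_zero_of_right _ ?_
    by_contra hw
    exact hσ (eq_of_prod_pathWeight_blockIndicator_ne_zero hpaths₀ hdisj₀ h.1 hw)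

end BlockIndicator

end GesselViennotLindstrom

open GesselViennotLindstrom in
theorem gessel_viennot_lindstrom_general (m ℓ : ℕ) (E : Fin m → Fin m → Prop)
    [DecidableRel E] (hE : ∀ a b : Fin m, E a b → a < b)
    (A B : Fin ℓ → Fin m) :
    (∀ Λ : Matrix (Fin m) (Fin m) ℝ, (∀ a b : Fin m, ¬E a b → Λ a b = 0) →
        (((1 - Λ)⁻¹).submatrix A B).det =
          ∑ σ : Equiv.Perm (Fin ℓ), ∑ f : Fin ℓ → Finset (Fin m),
            if (∀ a : Fin ℓ, IsPathSet E (f a) (A a) (B (σ a))) ∧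
                ∀ a b : Fin ℓ, a ≠ b → Disjoint (f a) (f b) then
              ((Equiv.Perm.sign σ : ℤ) : ℝ) * ∏ a : Fin ℓ, pathWeight Λ (f a)
            else 0) ∧
      ((∀ Λ : Matrix (Fin m) (Fin m) ℝ, (∀ a b : Fin m, ¬E a b → Λ a b = 0) →
          (((1 - Λ)⁻¹).submatrix A B).det = 0) ↔
        ∀ (σ : Equiv.Perm (Fin ℓ)) (f : Fin ℓ → Finset (Fin m)),
          (∀ a : Fin ℓ, IsPathSet E (f a) (A a) (B (σ a))) →
            ∃ a b : Fin ℓ, a ≠ b ∧ ¬Disjoint (f a) (f b)) := by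
  refine ⟨fun Λ hΛ => by convert det_submatrix_inv_one_sub_eq_sum Λ hE hΛ,
    fun hzero σ f hpaths => ?_, fun hcross Λ hΛ => ?_⟩
  · by_contra hdisj
    push Not at hdisj
    exact det_submatrix_inv_one_sub_blockIndicator_ne_zero hE hpaths hdisj
      (hzero _ fun _ _ => blockIndicator_eq_zero)
  · rw [det_submatrix_inv_one_sub_eq_sum Λ hE hΛ]
    refine sum_eq_zero fun σ _ => sum_eq_zero fun f _ => if_neg ?_
    rintro ⟨hpaths, hdisj⟩
    obtain ⟨a, b, hab, hnd⟩ := hcross σ f hpaths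
    exact hnd (hdisj a b hab)

/-- Gessel–Viennot–Lindström: det ((I−Λ)⁻¹)_{A,B} equals the signed sum over systems
    of pairwise vertex-disjoint directed paths connecting A bijectively to B; it
    vanishes identically in the edge weights iff every system of ℓ directed paths
    from A to B has two paths sharing a vertex. -/
theorem gessel_viennot_lindstrom (m ℓ : ℕ) (E : Fin m → Fin m → Prop)
    [DecidableRel E] (hE : ∀ a b : Fin m, E a b → a < b)
    (A B : Fin ℓ → Fin m) (hA : Function.Injective A) (hB : Function.Injective B) :
    (∀ Λ : Matrix (Fin m) (Fin m) ℝ, (∀ a b : Fin m, ¬E a b → Λ a b = 0) →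
        (((1 - Λ)⁻¹).submatrix A B).det =
          ∑ σ : Equiv.Perm (Fin ℓ), ∑ f : Fin ℓ → Finset (Fin m),
            if (∀ a : Fin ℓ, IsPathSet E (f a) (A a) (B (σ a))) ∧
                ∀ a b : Fin ℓ, a ≠ b → Disjoint (f a) (f b) then
              ((Equiv.Perm.sign σ : ℤ) : ℝ) * ∏ a : Fin ℓ, pathWeight Λ (f a)
            else 0) ∧
      ((∀ Λ : Matrix (Fin m) (Fin m) ℝ, (∀ a b : Fin m, ¬E a b → Λ a b = 0) →
          (((1 - Λ)⁻¹).submatrix A B).det = 0) ↔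
        ∀ (σ : Equiv.Perm (Fin ℓ)) (f : Fin ℓ → Finset (Fin m)),
          (∀ a : Fin ℓ, IsPathSet E (f a) (A a) (B (σ a))) →
            ∃ a b : Fin ℓ, a ≠ b ∧ ¬Disjoint (f a) (f b)) :=
  gessel_viennot_lindstrom_general m ℓ E hE A B
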